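/- For every n ≥ 5, the set X'_n = {0, 1, …, n} with the operation · defined by: x·y = x*y for x, y ≤ n−1 (where * is the operation of X_n); n·0 = n; n·y = n−y−1 for 1 ≤ y ≤ n−2; n·(n−1) = 1; x·n = 0 for every x ≠ n−1 (in particular n·n = 0); and (n−1)·n = 1, is a BCK-algebra of order n+1. Its BCK-order is the natural order on {0, 1, …, n−2} together with two incomparable maximal elements n−1 and n lying above n−2. -/

import Mathlib

/-- The operation of the linearly ordered BCK-algebra `X_n` written on natural
numbers: `x*y = 0` if `x ≤ y`, `x*0 = x`, `x*y = 1` if `x = y+1`, and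
`x*y = x−y−1` if `x > y+1` and `y ≥ 1`. -/
def natStar (x y : ℕ) : ℕ :=
  if x ≤ y then 0 else if y = 0 then x else if x = y + 1 then 1 else x - y - 1

/-- The operation of `X'_n = {0, 1, …, n}` written on natural numbers:
`x·y = x*y` for `x, y ≤ n−1`; `n·0 = n`; `n·y = n−y−1` for `1 ≤ y ≤ n−2`;
`n·(n−1) = 1`; `x·n = 0` for every `x ≠ n−1` (in particular `n·n = 0`);
and `(n−1)·n = 1`. -/
def primeVal (n x y : ℕ) : ℕ :=
  if y = n then (if x = n - 1 then 1 else 0)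
  else if x = n then (if y = 0 then n else if y = n - 1 then 1 else n - y - 1)
  else natStar x y

theorem natStar_le (x y : ℕ) : natStar x y ≤ x := by
  unfold natStar; split_ifs <;> omega

theorem primeVal_lt {n x y : ℕ} (hn : 1 ≤ n) (hx : x < n + 1) (hy : y < n + 1) :
    primeVal n x y < n + 1 := by
  have h := natStar_le x y
  unfold primeVal; split_ifs <;> omega

/-- The BCK-algebra operation of `X'_n = {0, 1, …, n}` (for `n ≥ 5`),
as an operation on `Fin (n+1)`. -/
def primeOp {n : ℕ} (hn : 5 ≤ n) (x y : Fin (n + 1)) : Fin (n + 1) :=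
  ⟨primeVal n x y, primeVal_lt (by omega) x.isLt y.isLt⟩

/-!
`X'_n` agrees with `X_{n+1}` (the operation `natStar` restricted to `{0, …, n}`) everywhere
except in the column of `n`, where `x·n = 0` for all `x` but `(n-1)·n = 1`; this single
change makes `n - 1` and `n` incomparable. Every value of the operation is then given by one
of six linear formulas on one of six linearly described regions, so each BCK-identity is a
finite disjunction of linear-arithmetic problems.
-/

theorem natStar_eq_zero_iff {x y : ℕ} : natStar x y = 0 ↔ x ≤ y := by
  unfold natStar; constructor <;> intro h <;> split_ifs at * <;> omega

theorem natStar_zero_right (x : ℕ) : natStar x 0 = x := by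
  unfold natStar; split_ifs <;> omega

theorem primeVal_of_ne_right {n x y : ℕ} (hy : y ≠ n) : primeVal n x y = natStar x y := by
  unfold primeVal natStar; split_ifs <;> omega

theorem primeVal_pred_self (n : ℕ) : primeVal n (n - 1) n = 1 := by
  simp [primeVal]

theorem primeVal_self_right {n x : ℕ} (hx : x ≠ n - 1) : primeVal n x n = 0 := by
  simp [primeVal, hx]

theorem primeVal_cases (n x y : ℕ) :
    (y = n ∧ x = n - 1 ∧ primeVal n x y = 1) ∨
    (y = n ∧ x ≠ n - 1 ∧ primeVal n x y = 0) ∨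
    (y ≠ n ∧ x ≤ y ∧ primeVal n x y = 0) ∨
    (y ≠ n ∧ y = 0 ∧ y < x ∧ primeVal n x y = x) ∨
    (y ≠ n ∧ 1 ≤ y ∧ x = y + 1 ∧ primeVal n x y = 1) ∨
    (y ≠ n ∧ 1 ≤ y ∧ y + 1 < x ∧ primeVal n x y = x - y - 1) := by
  unfold primeVal natStar; split_ifs <;> omega

theorem primeVal_axiom1 {n x z : ℕ} (hn : 3 ≤ n) (hx : x ≤ n) (hz : z ≤ n) (y : ℕ) :
    primeVal n (primeVal n (primeVal n x y) (primeVal n z y)) (primeVal n x z) = 0 := by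
  have cases := primeVal_cases n
  have := cases x y
  have := cases z y
  have := cases x z
  have := cases (primeVal n x y) (primeVal n z y)
  have := cases (primeVal n (primeVal n x y) (primeVal n z y)) (primeVal n x z)
  omega

theorem primeVal_axiom2 {n : ℕ} (hn : 2 ≤ n) (x y : ℕ) :
    primeVal n (primeVal n x (primeVal n x y)) y = 0 := by
  have cases := primeVal_cases n
  have := cases x y
  have := cases x (primeVal n x y)
  have := cases (primeVal n x (primeVal n x y)) y
  omega

theorem primeVal_zero_right {n : ℕ} (hn : n ≠ 0) (x : ℕ) : primeVal n x 0 = x := by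
  rw [primeVal_of_ne_right hn.symm, natStar_zero_right]

theorem primeVal_zero_left {n : ℕ} (hn : 2 ≤ n) (y : ℕ) : primeVal n 0 y = 0 := by
  unfold primeVal natStar; split_ifs <;> omega

theorem primeVal_antisymm {n x y : ℕ} (hx : x ≤ n) (hy : y ≤ n)
    (hxy : primeVal n x y = 0) (hyx : primeVal n y x = 0) : x = y := by
  unfold primeVal natStar at hxy hyx; split_ifs at hxy hyx <;> omega

theorem primeVal_eq_zero_iff_le {n x y : ℕ} (hy : y ≠ n) : primeVal n x y = 0 ↔ x ≤ y := by
  rw [primeVal_of_ne_right hy, natStar_eq_zero_iff]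

theorem eq_of_primeVal_pred_eq_zero {n x : ℕ} (hx : x ≤ n) (h : primeVal n (n - 1) x = 0) :
    x = n - 1 := by
  unfold primeVal natStar at h; split_ifs at h <;> omega

theorem eq_of_primeVal_self_eq_zero {n x : ℕ} (hx : x ≤ n) (h : primeVal n n x = 0) :
    x = n := by
  unfold primeVal natStar at h; split_ifs at h <;> omega

theorem val_primeOp {n : ℕ} (hn : 5 ≤ n) (x y : Fin (n + 1)) :
    (primeOp hn x y : ℕ) = primeVal n x y := rfl

theorem primeOp_isBCK (n : ℕ) (hn : 5 ≤ n) :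
    Fintype.card (Fin (n + 1)) = n + 1 ∧
    (∀ x y z : Fin (n + 1),
      primeOp hn (primeOp hn (primeOp hn x y) (primeOp hn z y)) (primeOp hn x z) = 0) ∧
    (∀ x y : Fin (n + 1), primeOp hn (primeOp hn x (primeOp hn x y)) y = 0) ∧
    (∀ x : Fin (n + 1), primeOp hn x 0 = x) ∧
    (∀ x : Fin (n + 1), primeOp hn 0 x = 0) ∧
    (∀ x y : Fin (n + 1), primeOp hn x y = 0 → primeOp hn y x = 0 → x = y) ∧
    (∀ x y : Fin (n + 1), (x : ℕ) ≤ n - 2 → (y : ℕ) ≤ n - 2 →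
      (primeOp hn x y = 0 ↔ (x : ℕ) ≤ (y : ℕ))) ∧
    (primeOp hn ⟨n - 1, by omega⟩ ⟨n, by omega⟩ ≠ 0) ∧
    (primeOp hn ⟨n, by omega⟩ ⟨n - 1, by omega⟩ ≠ 0) ∧
    (primeOp hn ⟨n - 2, by omega⟩ ⟨n - 1, by omega⟩ = 0) ∧
    (primeOp hn ⟨n - 2, by omega⟩ ⟨n, by omega⟩ = 0) ∧
    (∀ x : Fin (n + 1), primeOp hn ⟨n - 1, by omega⟩ x = 0 → x = ⟨n - 1, by omega⟩) ∧
    (∀ x : Fin (n + 1), primeOp hn ⟨n, by omega⟩ x = 0 → x = ⟨n, by omega⟩) := by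
  simp only [ne_eq, Fin.ext_iff, val_primeOp, Fin.forall_iff, Fin.val_zero,
    Nat.lt_succ_iff]
  refine ⟨Fintype.card_fin _, fun x hx y _ z hz => primeVal_axiom1 (by omega) hx hz y,
    fun x _ y _ => primeVal_axiom2 (by omega) x y,
    fun x _ => primeVal_zero_right (by omega) x, fun y _ => primeVal_zero_left (by omega) y,
    fun x hx y hy => primeVal_antisymm hx hy,
    fun x _ y _ _ hy => primeVal_eq_zero_iff_le (by omega), ?_, ?_, ?_, ?_,
    fun x hx => eq_of_primeVal_pred_eq_zero hx, fun x hx => eq_of_primeVal_self_eq_zero hx⟩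
  · simp [primeVal_pred_self]
  · rw [primeVal_eq_zero_iff_le (by omega)]; omega
  · rw [primeVal_eq_zero_iff_le (by omega)]; omega
  · exact primeVal_self_right (by omega)
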